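/- arXiv:1811.06221 — 3 statements merged into one kernel-verified Lean document; each statement's English description precedes it below -/
import Mathlib

section
/- The range of P_χ equals the sum (supremum) of all G-invariant subspaces p of W such that the representation of G on p obtained by restricting ρ is isomorphic to M. In particular, the image of the projection P_χ is the M-isotypic component of W. -/
open CategoryTheory Finset

/-- The projection endomorphism `P_χ = (χ(1)/|G|) · Σ_{g ∈ G} χ(g⁻¹) ρ(g)` of the
representation `W`, associated to the character `χ` of the representation `M`. -/
noncomputable def Pchi {G : Type} [Group G] [Fintype G]
    (W M : FDRep ℂ G) : W →ₗ[ℂ] W :=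
  (M.character 1 / (Fintype.card G : ℂ)) • ∑ g : G, M.character g⁻¹ • W.ρ g

/-!
`P_χ` commutes with `G` because `χ` is a class function, so by Schur's lemma it acts on an
irreducible representation `N` by a scalar `c`. Taking traces and using the orthogonality of
characters gives `c · dim N = χ(1) · [N ≅ M]`, so `P_χ` is the identity on copies of `M` and
vanishes on the other irreducibles. Since `P_χ` commutes with the inclusion of a
subrepresentation, it is the identity on every `p ≅ M`; and since by Maschke's theorem `W` is
the sum of its irreducible subrepresentations, the range of `P_χ` is the sum of the copies of
`M` inside `W`.
-/

namespace Representation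

variable {k G V U : Type*} [Field k] [Group G] [Fintype G]
  [AddCommGroup V] [Module k V] [AddCommGroup U] [Module k U]

noncomputable def charProjection (χ : G → k) (ρ : Representation k G V) : V →ₗ[k] V :=
  (χ 1 / Fintype.card G) • ∑ g : G, χ g⁻¹ • ρ g

lemma charProjection_apply (χ : G → k) (ρ : Representation k G V) (v : V) :
    charProjection χ ρ v = (χ 1 / Fintype.card G) • ∑ g : G, χ g⁻¹ • ρ g v := by
  simp [charProjection]

lemma IsIntertwiningMap.map_charProjection {ρ : Representation k G V}
    {σ : Representation k G U} {f : V →ₗ[k] U} (hf : IsIntertwiningMap ρ σ f) (χ : G → k)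
    (v : V) : f (charProjection χ ρ v) = charProjection χ σ (f v) := by
  simp [charProjection_apply, map_sum, hf.isIntertwining]

lemma isIntertwiningMap_charProjection {χ : G → k} (hχ : ∀ g h, χ (h * g * h⁻¹) = χ g)
    (ρ : Representation k G V) : IsIntertwiningMap ρ ρ (charProjection χ ρ) := by
  refine ⟨fun h v => ?_⟩
  simp only [charProjection_apply, map_smul, map_sum]
  congr 1
  refine (Fintype.sum_equiv (MulAut.conj h).toEquiv _ _ fun g => ?_).symm
  rw [MulEquiv.toEquiv_eq_coe, MulEquiv.coe_toEquiv, MulAut.conj_apply,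
    show (h * g * h⁻¹)⁻¹ = h * g⁻¹ * h⁻¹ by group, hχ, ← Module.End.mul_apply,
    ← Module.End.mul_apply, ← map_mul, ← map_mul, inv_mul_cancel_right]

lemma trace_charProjection (σ : Representation k G U) (ρ : Representation k G V) :
    LinearMap.trace k V (charProjection σ.character ρ) =
      σ.character 1 / Fintype.card G * ∑ g : G, ρ.character g * σ.character g⁻¹ := by
  simp [charProjection, map_sum, character, mul_comm]

variable [IsAlgClosed k] [FiniteDimensional k V]

lemma exists_charProjection_eq_smul_id {χ : G → k} (hχ : ∀ g h, χ (h * g * h⁻¹) = χ g)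
    (ρ : Representation k G V) [IsIrreducible ρ] :
    ∃ c : k, charProjection χ ρ = c • LinearMap.id := by
  obtain ⟨c, hc⟩ := (IsIrreducible.algebraMap_intertwiningMap_bijective_of_isAlgClosed
    (ρ := ρ)).2 ⟨charProjection χ ρ,
      fun g => LinearMap.ext ((isIntertwiningMap_charProjection hχ ρ).isIntertwining g)⟩
  exact ⟨c, (congrArg IntertwiningMap.toLinearMap hc).symm⟩

variable [CharZero k] [FiniteDimensional k U]

open scoped Classical in
theorem charProjection_character_of_isIrreducible (σ : Representation k G U)
    (ρ : Representation k G V) [IsIrreducible σ] [IsIrreducible ρ] :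
    charProjection σ.character ρ = if Nonempty (Equiv σ ρ) then LinearMap.id else 0 := by
  obtain ⟨c, hc⟩ := exists_charProjection_eq_smul_id (char_conj σ) ρ
  have : Invertible (Nat.card G : k) := invertibleOfNonzero (Nat.cast_ne_zero.2 Nat.card_pos.ne')
  have : Nontrivial V := IsSimpleModule.nontrivial (MonoidAlgebra k G) ρ.asModule
  have hV : (Module.finrank k V : k) ≠ 0 := Nat.cast_ne_zero.2 Module.finrank_pos.ne'
  have key : c * Module.finrank k V = σ.character 1 * if Nonempty (Equiv σ ρ) then 1 else 0 := by
    rw [← char_orthonormal, ← LinearMap.trace_id, ← smul_eq_mul, ← map_smul, ← hc,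
      trace_charProjection, Nat.card_eq_fintype_card]
    ring
  split_ifs at key ⊢ with hσρ
  · rw [mul_one, char_one, hσρ.some.toLinearEquiv.finrank_eq] at key
    rw [hc, mul_eq_right₀ hV |>.1 key, one_smul]
  · rw [hc, (mul_eq_zero.1 (key.trans (mul_zero _))).resolve_right hV, zero_smul]

end Representation

namespace Subrepresentation

open Representation

section Monoid

variable {k G V : Type*} [Field k] [Monoid G] [AddCommGroup V] [Module k V]
  {ρ : Representation k G V} {σ : Subrepresentation ρ}

def mapSubtype (τ : Subrepresentation σ.toRepresentation) : Subrepresentation ρ where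
  toSubmodule := τ.toSubmodule.map σ.toSubmodule.subtype
  apply_mem_toSubmodule g := by
    rintro _ ⟨x, hx, rfl⟩
    exact ⟨_, τ.apply_mem_toSubmodule g hx, rfl⟩

lemma mapSubtype_le (τ : Subrepresentation σ.toRepresentation) : mapSubtype τ ≤ σ := by
  rintro _ ⟨y, -, rfl⟩
  exact y.2

lemma mem_mapSubtype {τ : Subrepresentation σ.toRepresentation} {x : σ.toSubmodule} :
    (x : V) ∈ (mapSubtype τ).toSubmodule ↔ x ∈ τ.toSubmodule := by
  simp [mapSubtype]

theorem isIrreducible_toRepresentation (hσ : IsAtom σ) : IsIrreducible σ.toRepresentation := by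
  obtain ⟨x, hx, hx₀⟩ :=
    Submodule.exists_mem_ne_zero_of_ne_bot fun h => hσ.1 (Subrepresentation.ext h)
  refine { exists_pair_ne := ⟨⊥, ⊤, fun h => hx₀ ?_⟩, eq_bot_or_eq_top := fun τ => ?_ }
  · have : (⟨x, hx⟩ : σ.toSubmodule) ∈ (⊥ : Subrepresentation σ.toRepresentation) :=
      h ▸ Submodule.mem_top
    exact congrArg Subtype.val this
  rcases hσ.le_iff.1 (mapSubtype_le τ) with h | h
  · left
    ext y
    rw [← mem_mapSubtype, h]
    exact (Submodule.mem_bot k).trans (Subtype.ext_iff.symm.trans (Submodule.mem_bot k).symm)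
  · right
    ext y
    rw [← mem_mapSubtype, h]
    exact iff_of_true y.2 Submodule.mem_top

end Monoid

variable {k G V U : Type*} [Field k] [Group G] [AddCommGroup V] [Module k V]
  [AddCommGroup U] [Module k U] {ρ : Representation k G V} {σ : Subrepresentation ρ}

theorem iSup_isAtom_toSubmodule_eq_top [Finite G] [NeZero (Nat.card G : k)]
    (ρ : Representation k G V) :
    ⨆ (σ : Subrepresentation ρ) (_ : IsAtom σ), σ.toSubmodule = ⊤ := by
  have h := congrArg (Submodule.restrictScalars k)
    (IsSemisimpleModule.sSup_simples_eq_top (MonoidAlgebra k G) ρ.asModule)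
  rw [Submodule.restrictScalars_sSup, Submodule.restrictScalars_top] at h
  refine eq_top_iff.2 (h.symm.trans_le (sSup_le ?_))
  rintro _ ⟨q, hq, rfl⟩
  have : IsAtom (ofSubmodule' q) :=
    (subrepresentationSubmoduleOrderIso.isAtom_iff _).1 (isSimpleModule_iff_isAtom.1 hq)
  exact le_iSup₂_of_le (ofSubmodule' q) this le_rfl

variable [Fintype G]

lemma charProjection_subtype (χ : G → k) (x : σ.toSubmodule) :
    (charProjection χ σ.toRepresentation x : V) = charProjection χ ρ x :=
  IsIntertwiningMap.map_charProjection (f := σ.toSubmodule.subtype) ⟨fun _ _ => rfl⟩ χ x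

variable [IsAlgClosed k] [CharZero k] [FiniteDimensional k U]
  {τ : Representation k G U} [IsIrreducible τ]

open scoped Classical in
theorem charProjection_apply_of_isIrreducible [FiniteDimensional k V]
    [IsIrreducible σ.toRepresentation] {x : V} (hx : x ∈ σ.toSubmodule) :
    charProjection τ.character ρ x = if Nonempty (Equiv τ σ.toRepresentation) then x else 0 := by
  rw [← charProjection_subtype _ ⟨x, hx⟩, charProjection_character_of_isIrreducible]
  split_ifs <;> rfl

theorem charProjection_apply_of_equiv (e : Equiv σ.toRepresentation τ) {x : V}
    (hx : x ∈ σ.toSubmodule) : charProjection τ.character ρ x = x := by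
  have hτ : charProjection τ.character τ = LinearMap.id := by
    rw [charProjection_character_of_isIrreducible, if_pos ⟨Representation.Equiv.refl τ⟩]
  have he : IsIntertwiningMap σ.toRepresentation τ e.toLinearMap :=
    ⟨e.toIntertwiningMap.isIntertwining⟩
  suffices h : charProjection τ.character σ.toRepresentation ⟨x, hx⟩ = ⟨x, hx⟩ by
    exact (charProjection_subtype _ ⟨x, hx⟩).symm.trans (congrArg Subtype.val h)
  exact e.injective ((he.map_charProjection _ _).trans (by rw [hτ]; rfl))

end Subrepresentation

namespace FDRep

open Representation

universe u

variable {k G : Type u} [Field k] [Monoid G]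

instance isIrreducible_ρ (V : FDRep k G) [Simple V] : IsIrreducible V.ρ := by
  refine { exists_pair_ne := ⟨⊥, ⊤, fun h => id_nonzero V ?_⟩, eq_bot_or_eq_top := fun σ => ?_ }
  · ext x
    have : x ∈ (⊥ : Subrepresentation V.ρ) := h ▸ Submodule.mem_top
    exact this
  let ι : FDRep.of σ.toRepresentation ⟶ V :=
    ⟨FGModuleCat.ofHom σ.toSubmodule.subtype, fun _ => rfl⟩
  have : Mono ι := ConcreteCategory.mono_of_injective ι Subtype.val_injective
  by_cases hι : ι = 0
  · left
    refine Subrepresentation.ext (eq_bot_iff.2 fun x hx => ?_)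
    exact ConcreteCategory.congr_hom hι ⟨x, hx⟩
  · right
    have : IsIso ι := (Simple.mono_isIso_iff_nonzero ι).2 hι
    refine Subrepresentation.ext (eq_top_iff.2 fun x _ => ?_)
    obtain ⟨y, rfl⟩ := (ConcreteCategory.bijective_of_isIso ι).2 x
    exact y.2

end FDRep

open Representation Subrepresentation in
/-- the range of `P_χ` is the sum of all `G`-invariant subspaces `p` of `W`
on which the restriction of `ρ` is isomorphic to `M`, i.e. the `M`-isotypic component
of `W`. -/
theorem range_Pchi_eq_isotypic {G : Type} [Group G] [Fintype G]
    (W M : FDRep ℂ G) [Simple M] :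
    LinearMap.range (Pchi W M) =
      sSup {p : Submodule ℂ W |
        ∃ hp : ∀ g : G, ∀ x ∈ p, W.ρ g x ∈ p,
          ∃ e : p ≃ₗ[ℂ] M, ∀ (g : G) (x : p),
            e ((W.ρ g).restrict (hp g) x) = M.ρ g (e x)} := by
  change LinearMap.range (charProjection (character M.ρ) W.ρ) = _
  apply le_antisymm
  · rw [LinearMap.range_eq_map, ← iSup_isAtom_toSubmodule_eq_top W.ρ]
    simp only [Submodule.map_iSup]
    refine iSup₂_le fun σ hσ => ?_
    have := isIrreducible_toRepresentation hσ
    refine Submodule.map_le_iff_le_comap.2 fun x hx => ?_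
    rw [Submodule.mem_comap, charProjection_apply_of_isIrreducible hx]
    split_ifs with hiso
    · obtain ⟨e⟩ := hiso
      refine le_sSup (a := σ.toSubmodule) ?_ hx
      exact ⟨σ.apply_mem_toSubmodule, e.symm.toLinearEquiv,
        e.symm.toIntertwiningMap.isIntertwining⟩
    · exact zero_mem _
  · refine sSup_le ?_
    rintro p ⟨hp, e, he⟩ x hx
    exact ⟨x, charProjection_apply_of_equiv (σ := ⟨p, hp⟩)
      (Representation.Equiv.mk e fun g => LinearMap.ext (he g)) hx⟩
end

section
/- For every finite-dimensional complex representation of the symmetric group S_n = Perm(Fin n) with character χ, and every permutation σ ∈ S_n, the character value χ(σ) is a rational integer, i.e., χ(σ) lies in the image of ℤ under the canonical map ℤ → ℂ. -/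
/-!
The eigenvalues of `ρ σ` are `m`-th roots of unity, `m` the order of `σ`, and `χ (σ ^ k)` is the
sum of their `k`-th powers. So `χ σ` is an algebraic integer in the `m`-th cyclotomic field, on
which the automorphism `ζ ↦ ζ ^ k` (`k` coprime to `m`) sends `χ σ` to `χ (σ ^ k)`. Since `σ ^ k`
has the cycle type of `σ`, it is conjugate to `σ`, so `χ σ` is Galois-invariant, hence rational,
hence an integer.
-/

open Module LinearMap Set

namespace Module.End

theorem trace_pow_eq_mul_trace_one_of_isNilpotent_sub_algebraMap {R M : Type*} [CommRing R]
    [IsReduced R] [AddCommGroup M] [Module R M] {f : End R M} {μ : R}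
    (hf : IsNilpotent (f - algebraMap R _ μ)) (k : ℕ) :
    trace R M (f ^ k) = μ ^ k * trace R M 1 := by
  induction k with
  | zero => simp
  | succ k ih =>
    rw [pow_succ, mul_eq_comp,
      trace_comp_eq_mul_of_commute_of_isNilpotent μ ((Commute.refl f).pow_left k) hf, ih,
      pow_succ']
    ring

theorem pow_eq_one_of_mem_roots_charpoly {R M : Type*} [CommRing R] [IsDomain R]
    [AddCommGroup M] [Module R M] [Module.Free R M] [Module.Finite R M] {f : End R M} {m : ℕ}
    (hf : f ^ m = 1) {μ : R} (hμ : μ ∈ f.charpoly.roots) : μ ^ m = 1 := by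
  obtain ⟨v, hv⟩ := ((hasEigenvalue_iff_isRoot_charpoly f μ).mpr
    (Polynomial.isRoot_of_mem_roots hμ)).exists_hasEigenvector
  have h := hv.pow_apply m
  rw [hf, one_apply] at h
  exact smul_left_injective R hv.2 (show μ ^ m • v = (1 : R) • v by rw [one_smul, ← h])

variable {K V : Type*} [Field K] [IsAlgClosed K] [AddCommGroup V] [Module K V]
  [FiniteDimensional K V]

theorem trace_pow_eq_sum_roots_charpoly_pow (f : End K V) (k : ℕ) :
    trace K V (f ^ k) = (f.charpoly.roots.map (· ^ k)).sum := by
  classical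
  have hint : DirectSum.IsInternal f.maxGenEigenspace :=
    DirectSum.isInternal_submodule_of_iSupIndep_of_iSup_eq_top
      f.independent_maxGenEigenspace f.iSup_maxGenEigenspace_eq_top
  have hfin : {μ | f.maxGenEigenspace μ ≠ ⊥}.Finite :=
    WellFoundedGT.finite_ne_bot_of_iSupIndep f.independent_maxGenEigenspace
  have hcount (μ : K) : f.charpoly.roots.count μ = finrank K (f.maxGenEigenspace μ) := by
    rw [Polynomial.count_roots, finrank_maxGenEigenspace_eq]
  have hsupp : hfin.toFinset = f.charpoly.roots.toFinset := by
    ext μ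
    rw [Finite.mem_toFinset, Multiset.mem_toFinset, ← Multiset.count_ne_zero, hcount]
    exact Submodule.finrank_eq_zero.not.symm
  have hmaps (μ : K) : MapsTo f (f.maxGenEigenspace μ) (f.maxGenEigenspace μ) :=
    f.mapsTo_maxGenEigenspace_of_comm (Commute.refl f) μ
  rw [trace_eq_sum_trace_restrict' hint hfin
      (fun μ ↦ f.mapsTo_maxGenEigenspace_of_comm ((Commute.refl f).pow_right k) μ),
    Finset.sum_multiset_map_count, hsupp]
  refine Finset.sum_congr rfl fun μ _ ↦ ?_
  rw [← pow_restrict k (hmaps μ), trace_pow_eq_mul_trace_one_of_isNilpotent_sub_algebraMap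
      (f.isNilpotent_restrict_maxGenEigenspace_sub_algebraMap μ), trace_one, hcount, nsmul_eq_mul,
    mul_comm]

end Module.End

theorem IsPrimitiveRoot.autToPow_spec_of_pow_eq_one {R S : Type*} [CommRing R] [CommRing S]
    [IsDomain S] [Algebra R S] {ζ : S} {m : ℕ} [NeZero m] (hζ : IsPrimitiveRoot ζ m)
    (g : S ≃ₐ[R] S) {μ : S} (hμ : μ ^ m = 1) :
    g μ = μ ^ (hζ.autToPow R g : ZMod m).val := by
  obtain ⟨i, -, rfl⟩ := hζ.eq_pow_of_pow_eq_one hμ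
  rw [map_pow, ← hζ.autToPow_spec R g, ← pow_mul, ← pow_mul, mul_comm]

theorem IsCyclotomicExtension.multiset_sum_mem_range_algebraMap_of_sum_pow_eq {m : ℕ} [NeZero m]
    {K : Type*} [Field K] [CharZero K] [IsCyclotomicExtension {m} ℚ K] {s : Multiset K}
    (hs : ∀ μ ∈ s, μ ^ m = 1) (h : ∀ k, k.Coprime m → (s.map (· ^ k)).sum = s.sum) :
    s.sum ∈ range (algebraMap ℚ K) := by
  have := IsCyclotomicExtension.isGalois {m} ℚ K
  have := IsCyclotomicExtension.finiteDimensional {m} ℚ K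
  have hζ := IsCyclotomicExtension.zeta_spec m ℚ K
  refine (IsGalois.mem_range_algebraMap_iff_fixed _).mpr fun g ↦ ?_
  rw [map_multiset_sum,
    Multiset.map_congr rfl fun μ hμ ↦ hζ.autToPow_spec_of_pow_eq_one g (hs μ hμ),
    h _ (ZMod.val_coe_unit_coprime _)]

theorem multiset_sum_mem_range_algebraMap_of_sum_pow_eq {m : ℕ} [NeZero m] {L : Type*} [Field L]
    [CharZero L] [HasEnoughRootsOfUnity L m] {s : Multiset L} (hs : ∀ μ ∈ s, μ ^ m = 1)
    (h : ∀ k, k.Coprime m → (s.map (· ^ k)).sum = s.sum) :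
    s.sum ∈ range (algebraMap ℚ L) := by
  let K := IntermediateField.adjoin ℚ {μ : L | ∃ n ∈ ({m} : Set ℕ), n ≠ 0 ∧ μ ^ n = 1}
  have : IsCyclotomicExtension {m} ℚ K :=
    IntermediateField.isCyclotomicExtension_adjoin_of_exists_isPrimitiveRoot _ _ _
      fun n hn _ ↦ (mem_singleton_iff.mp hn) ▸ HasEnoughRootsOfUnity.exists_primitiveRoot L m
  lift s to Multiset K using fun μ hμ ↦
    IntermediateField.subset_adjoin _ _ ⟨m, rfl, NeZero.ne m, hs μ hμ⟩
  have hs' : ∀ μ ∈ s, μ ^ m = 1 := fun μ hμ ↦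
    Subtype.ext (by simpa using hs μ (Multiset.mem_map_of_mem _ hμ))
  have h' : ∀ k, k.Coprime m → (s.map (· ^ k)).sum = s.sum := fun k hk ↦
    Subtype.ext (by simpa [Multiset.map_map] using h k hk)
  obtain ⟨q, hq⟩ := IsCyclotomicExtension.multiset_sum_mem_range_algebraMap_of_sum_pow_eq hs' h'
  exact ⟨q, by simpa using congrArg K.val hq⟩

theorem exists_intCast_eq_of_isIntegral_of_mem_range {L : Type*} [Field L] [CharZero L] {x : L}
    (hx : IsIntegral ℤ x) (hq : x ∈ range (algebraMap ℚ L)) : ∃ z : ℤ, x = z := by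
  obtain ⟨q, rfl⟩ := hq
  obtain ⟨z, rfl⟩ := IsIntegrallyClosed.isIntegral_iff.mp
    ((isIntegral_algebraMap_iff (algebraMap ℚ L).injective).mp hx)
  exact ⟨z, by simp⟩

namespace Equiv.Perm

variable {α : Type*} [Fintype α] [DecidableEq α]

theorem cycleType_pow_of_coprime (σ : Perm α) {k : ℕ} (h : k.Coprime (orderOf σ)) :
    (σ ^ k).cycleType = σ.cycleType := by
  induction σ using cycle_induction_on with
  | base_one => simp
  | base_cycles c hc =>
    rw [hc.cycleType, (hc.pow_iff.mpr h).cycleType, support_pow_coprime h]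
  | induction_disjoint f g hd _ ihf ihg =>
    rw [hd.orderOf] at h
    rw [hd.commute.mul_pow, (hd.pow_disjoint_pow k k).cycleType_mul, hd.cycleType_mul,
      ihf (h.coprime_dvd_right (Nat.dvd_lcm_left _ _)),
      ihg (h.coprime_dvd_right (Nat.dvd_lcm_right _ _))]

theorem isConj_pow_of_coprime (σ : Perm α) {k : ℕ} (h : k.Coprime (orderOf σ)) :
    IsConj σ (σ ^ k) :=
  isConj_iff_cycleType_eq.mpr (cycleType_pow_of_coprime σ h).symm

end Equiv.Perm

namespace FDRep

open Module.End

theorem exists_intCast_character_eq_of_forall_isConj_pow {k G : Type*} [Field k] [IsAlgClosed k]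
    [CharZero k] [Group G] (W : FDRep k G) {g : G} (hg : IsOfFinOrder g)
    (hconj : ∀ n, n.Coprime (orderOf g) → IsConj g (g ^ n)) :
    ∃ z : ℤ, W.character g = z := by
  have : NeZero (orderOf g) := ⟨hg.orderOf_pos.ne'⟩
  set s := (W.ρ g).charpoly.roots
  have hs : ∀ μ ∈ s, μ ^ orderOf g = 1 := fun μ ↦
    pow_eq_one_of_mem_roots_charpoly (by rw [← map_pow, pow_orderOf_eq_one, map_one])
  have hpow (n : ℕ) : W.character (g ^ n) = (s.map (· ^ n)).sum := by
    rw [character, map_pow, trace_pow_eq_sum_roots_charpoly_pow]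
  have hχ : W.character g = s.sum := by simpa using hpow 1
  refine exists_intCast_eq_of_isIntegral_of_mem_range ?_ ?_
  · rw [hχ]
    exact IsIntegral.multiset_sum fun μ hμ ↦
      IsIntegral.of_pow hg.orderOf_pos (by rw [hs μ hμ]; exact isIntegral_one)
  · rw [hχ]
    refine multiset_sum_mem_range_algebraMap_of_sum_pow_eq hs fun n hn ↦ ?_
    obtain ⟨c, hc⟩ := isConj_iff.mp (hconj n hn)
    rw [← hpow, ← hχ, ← hc, char_conj]

end FDRep

/-- every character value of a finite-dimensional complex representation of
the symmetric group `S_n = Perm (Fin n)` is a rational integer. -/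
theorem character_symmetricGroup_integer (n : ℕ)
    (W : FDRep ℂ (Equiv.Perm (Fin n))) (σ : Equiv.Perm (Fin n)) :
    ∃ m : ℤ, W.character σ = (m : ℂ) :=
  W.exists_intCast_character_eq_of_forall_isConj_pow (isOfFinOrder_of_finite σ)
    fun _ ↦ σ.isConj_pow_of_coprime
end

section
/- For every tensor t ∈ V^{⊗n}, every permutation τ ∈ S_n, and every irreducible character χ of S_n, the Schur amplitudes are invariant under reordering: Σ_β (coord_β(π_χ(A_τ(t))))² = Σ_β (coord_β(π_χ(t)))², where coord_β are the coordinates with respect to the basis of V^{⊗n} induced by a basis b of V. In particular, the Schur amplitudes of the covariance tensor do not depend on the order of the variables X_1, …, X_n. -/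
open scoped TensorProduct
open PiTensorProduct CategoryTheory

/-- The action of a permutation `τ ∈ S_n` on `V^{⊗n}`, sending
`w₁ ⊗ ⋯ ⊗ wₙ` to `w_{τ⁻¹(1)} ⊗ ⋯ ⊗ w_{τ⁻¹(n)}`. -/
noncomputable def permAction {n : ℕ} {V : Type*} [AddCommGroup V] [Module ℝ V]
    (τ : Equiv.Perm (Fin n)) :
    (⨂[ℝ] _ : Fin n, V) ≃ₗ[ℝ] (⨂[ℝ] _ : Fin n, V) :=
  PiTensorProduct.reindex ℝ (fun _ : Fin n => V) τ

/-- Given a basis `b = (b₁, …, b_k)` of `V`, the coordinate of a tensor `t ∈ V^{⊗n}`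
at the induced basis element `b_{β(1)} ⊗ ⋯ ⊗ b_{β(n)}` of `V^{⊗n}`: the linear
functional sending `w₁ ⊗ ⋯ ⊗ wₙ` to `∏ i, coord_{β(i)}(w_i)`. -/
noncomputable def tensorCoord {n k : ℕ} {V : Type*} [AddCommGroup V] [Module ℝ V]
    (b : Module.Basis (Fin k) ℝ V) (β : Fin n → Fin k) : (⨂[ℝ] _ : Fin n, V) →ₗ[ℝ] ℝ :=
  PiTensorProduct.lift
    ((MultilinearMap.mkPiAlgebra ℝ (Fin n) ℝ).compLinearMap fun i => b.coord (β i))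

/-- The Schur projector `π_χ = (χ(1)/n!) · Σ_{τ ∈ S_n} χ(τ⁻¹) A_τ` on `V^{⊗n}`, where
`c : S_n → ℝ` records the (real, in fact integer) values of the irreducible
character `χ`. -/
noncomputable def schurProjector {n : ℕ} {V : Type*} [AddCommGroup V] [Module ℝ V]
    (c : Equiv.Perm (Fin n) → ℝ) :
    (⨂[ℝ] _ : Fin n, V) →ₗ[ℝ] (⨂[ℝ] _ : Fin n, V) :=
  (c 1 / (n.factorial : ℝ)) •
    ∑ τ : Equiv.Perm (Fin n), c τ⁻¹ • (permAction (V := V) τ).toLinearMap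

/-!
The projector `π_χ` is a combination of the operators `A_σ` with coefficients constant on
conjugacy classes, so it commutes with every `A_τ`; and `A_τ` merely permutes the coordinates
`coord_β`, hence preserves the sum of their squares.
-/

section

variable {n k : ℕ} {V : Type*} [AddCommGroup V] [Module ℝ V]

lemma permAction_mul (σ τ : Equiv.Perm (Fin n)) (t : ⨂[ℝ] _ : Fin n, V) :
    permAction (σ * τ) t = permAction σ (permAction τ t) := by
  simpa [permAction, Equiv.Perm.mul_def] using
    (PiTensorProduct.reindex_reindex (s := fun _ : Fin n => V) τ σ t).symm

lemma tensorCoord_permAction (b : Module.Basis (Fin k) ℝ V) (β : Fin n → Fin k)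
    (τ : Equiv.Perm (Fin n)) (t : ⨂[ℝ] _ : Fin n, V) :
    tensorCoord b β (permAction τ t) = tensorCoord b (β ∘ τ) t := by
  suffices tensorCoord b β ∘ₗ (permAction (V := V) τ).toLinearMap = tensorCoord b (β ∘ τ) from
    LinearMap.congr_fun this t
  refine PiTensorProduct.ext (MultilinearMap.ext fun f => ?_)
  simp only [LinearMap.compMultilinearMap_apply, LinearMap.comp_apply, LinearEquiv.coe_coe,
    permAction, reindex_tprod, tensorCoord, lift.tprod, MultilinearMap.compLinearMap_apply,
    MultilinearMap.mkPiAlgebra_apply, Function.comp_apply]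
  exact (Equiv.prod_comp τ fun i => b.coord (β i) (f (τ.symm i))).symm.trans (by simp)

lemma sum_sq_tensorCoord_permAction (b : Module.Basis (Fin k) ℝ V) (τ : Equiv.Perm (Fin n))
    (t : ⨂[ℝ] _ : Fin n, V) :
    ∑ β : Fin n → Fin k, tensorCoord b β (permAction τ t) ^ 2 =
      ∑ β : Fin n → Fin k, tensorCoord b β t ^ 2 := by
  simp only [tensorCoord_permAction]
  exact Fintype.sum_equiv (Equiv.arrowCongr τ.symm (Equiv.refl (Fin k))) _ _ fun β => rfl

lemma schurProjector_permAction {c : Equiv.Perm (Fin n) → ℝ}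
    (hc : ∀ σ g, c (σ * g * σ⁻¹) = c g) (τ : Equiv.Perm (Fin n)) (t : ⨂[ℝ] _ : Fin n, V) :
    schurProjector c (permAction τ t) = permAction τ (schurProjector c t) := by
  simp only [schurProjector, LinearMap.smul_apply, LinearMap.sum_apply, map_smul, map_sum,
    LinearEquiv.coe_coe, ← permAction_mul]
  congr 1
  refine Fintype.sum_equiv (MulAut.conj τ⁻¹).toEquiv _ _ fun σ => ?_
  have hcoeff : c (τ⁻¹ * σ * τ⁻¹⁻¹)⁻¹ = c σ⁻¹ := by
    simpa only [mul_inv_rev, inv_inv, mul_assoc] using hc τ⁻¹ σ⁻¹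
  simp only [MulEquiv.toEquiv_eq_coe, MulEquiv.coe_toEquiv, MulAut.conj_apply, hcoeff]
  congr 2
  group

end

theorem schurAmplitude_permAction_invariant_general {n k : ℕ} {V : Type*}
    [AddCommGroup V] [Module ℝ V] (b : Module.Basis (Fin k) ℝ V)
    (M : FDRep ℂ (Equiv.Perm (Fin n)))
    (c : Equiv.Perm (Fin n) → ℝ) (hc : ∀ τ : Equiv.Perm (Fin n), (c τ : ℂ) = M.character τ)
    (t : ⨂[ℝ] _ : Fin n, V) (τ : Equiv.Perm (Fin n)) :
    ∑ β : Fin n → Fin k, (tensorCoord b β (schurProjector c (permAction τ t))) ^ 2 =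
      ∑ β : Fin n → Fin k, (tensorCoord b β (schurProjector c t)) ^ 2 := by
  have hclass : ∀ σ g, c (σ * g * σ⁻¹) = c g := fun σ g => by
    exact_mod_cast (hc _).trans ((M.char_conj g σ).trans (hc g).symm)
  rw [schurProjector_permAction hclass, sum_sq_tensorCoord_permAction]

/-- the squared Schur amplitudes are invariant under reordering the tensor
factors: for every tensor `t`, permutation `τ` and irreducible character `χ` of `S_n`
(with real values `c`), `Σ_β (coord_β (π_χ (A_τ t)))² = Σ_β (coord_β (π_χ t))²`.
Hence the Schur amplitudes of the covariance tensor do not depend on the order of the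
variables. -/
theorem schurAmplitude_permAction_invariant {n k : ℕ} {V : Type*}
    [AddCommGroup V] [Module ℝ V] (b : Module.Basis (Fin k) ℝ V)
    (M : FDRep ℂ (Equiv.Perm (Fin n))) [Simple M]
    (c : Equiv.Perm (Fin n) → ℝ) (hc : ∀ τ : Equiv.Perm (Fin n), (c τ : ℂ) = M.character τ)
    (t : ⨂[ℝ] _ : Fin n, V) (τ : Equiv.Perm (Fin n)) :
    ∑ β : Fin n → Fin k, (tensorCoord b β (schurProjector c (permAction τ t))) ^ 2 =
      ∑ β : Fin n → Fin k, (tensorCoord b β (schurProjector c t)) ^ 2 :=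
  schurAmplitude_permAction_invariant_general b M c hc t τ
end
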